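/- If the multiplicities q_j are all multiplied by a constant K ≥ 1, the critical number scales as Ñ_cr ∼ K^{2/5} N_cr as M → ∞. -/

import Mathlib

open Real Filter

/-!
Write `boseSum p b = ∑_{n ≥ 1} n^p q_n / (e^{bn} - 1)`, so that the constraint on `β` reads
`boseSum 1 β = M`, the one on `β̃` reads `boseSum 1 β̃ = M / K`, and the critical numbers are
`boseSum 0 β` and `K · boseSum 0 β̃`. Since `q_n ≈ √n`, a Riemann-sum argument (dominated
convergence for the step functions `t ↦ (bn)^p √b q_n / (e^{bn} - 1)` with `n = ⌈t / b⌉`) gives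
`b^(p + 3/2) · boseSum p b → ∫₀^∞ t^p √t / (e^t - 1) dt > 0` as `b → 0⁺`. Hence both `β` and `β̃`
tend to `0`, `(β̃ / β)^(5/2) → K`, and `boseSum 0 β̃ / boseSum 0 β ~ (β̃ / β)^(-3/2) → K^(-3/5)`.
The limiting integrals cancel in both ratios, so they never have to be evaluated.
-/

open MeasureTheory Set Topology
open scoped ENNReal

section RegularVariation

variable {ι : Type*} {l : Filter ι} {f : ℝ → ℝ} {a A : ℝ} {u v : ι → ℝ}

lemma tendsto_nhdsGT_zero_of_antitoneOn (hf : AntitoneOn f (Ioi 0)) (hu : ∀ᶠ x in l, 0 < u x)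
    (hfu : Tendsto (fun x => f (u x)) l atTop) : Tendsto u l (𝓝[>] 0) := by
  refine tendsto_nhdsWithin_iff.2 ⟨tendsto_order.2 ⟨fun c hc => hu.mono fun x hx => hc.trans hx,
    fun ε hε => ?_⟩, hu⟩
  filter_upwards [hu, hfu.eventually_gt_atTop (f ε)] with x hx hfx
  by_contra! hεx
  linarith [hf hε hx hεx]

lemma tendsto_rpow_mul_div_rpow_mul (hf : Tendsto (fun b => b ^ a * f b) (𝓝[>] 0) (𝓝 A))
    (hA : A ≠ 0) (hu : Tendsto u l (𝓝[>] 0)) (hv : Tendsto v l (𝓝[>] 0)) :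
    Tendsto (fun x => v x ^ a * f (v x) / (u x ^ a * f (u x))) l (𝓝 1) := by
  have h := (hf.comp hv).div (hf.comp hu) hA
  rwa [div_self hA] at h

lemma tendsto_apply_div_apply_of_tendsto_div (hf : Tendsto (fun b => b ^ a * f b) (𝓝[>] 0) (𝓝 A))
    (hA : A ≠ 0) (hu : Tendsto u l (𝓝[>] 0)) (hv : Tendsto v l (𝓝[>] 0)) {r : ℝ} (hr : 0 < r)
    (hvu : Tendsto (fun x => v x / u x) l (𝓝 r)) :
    Tendsto (fun x => f (v x) / f (u x)) l (𝓝 (r ^ (-a))) := by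
  have h := (tendsto_rpow_mul_div_rpow_mul hf hA hu hv).mul (hvu.rpow_const (p := -a) (.inl hr.ne'))
  rw [one_mul] at h
  refine h.congr' ?_
  filter_upwards [hu.eventually eventually_mem_nhdsWithin,
    hv.eventually eventually_mem_nhdsWithin] with x (hux : 0 < u x) (hvx : 0 < v x)
  rw [div_rpow hvx.le hux.le, rpow_neg hvx.le, rpow_neg hux.le]
  field_simp

lemma tendsto_div_of_tendsto_apply_div_apply (hf : Tendsto (fun b => b ^ a * f b) (𝓝[>] 0) (𝓝 A))
    (hA : A ≠ 0) (ha : a ≠ 0) (hu : Tendsto u l (𝓝[>] 0)) (hv : Tendsto v l (𝓝[>] 0)) {L : ℝ}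
    (hL : 0 < L) (hfvu : Tendsto (fun x => f (v x) / f (u x)) l (𝓝 L)) :
    Tendsto (fun x => v x / u x) l (𝓝 (L ^ (-a⁻¹))) := by
  have hux : ∀ᶠ x in l, 0 < u x := hu.eventually eventually_mem_nhdsWithin
  have hvx : ∀ᶠ x in l, 0 < v x := hv.eventually eventually_mem_nhdsWithin
  have hpow : Tendsto (fun x => (v x / u x) ^ a) l (𝓝 L⁻¹) := by
    have h := (tendsto_rpow_mul_div_rpow_mul hf hA hu hv).div hfvu hL.ne'
    rw [one_div] at h
    refine h.congr' ?_
    filter_upwards [hux, hvx, (hf.comp hu).eventually_ne hA, (hf.comp hv).eventually_ne hA]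
      with x hux hvx hfu hfv
    have hfu₀ : f (u x) ≠ 0 := right_ne_zero_of_mul hfu
    have hfv₀ : f (v x) ≠ 0 := right_ne_zero_of_mul hfv
    simp only [Pi.div_apply, div_rpow hvx.le hux.le]
    field_simp
  have h := hpow.rpow_const (p := a⁻¹) (.inl (inv_ne_zero hL.ne'))
  rw [inv_rpow hL.le, ← rpow_neg hL.le] at h
  refine h.congr' ?_
  filter_upwards [hux, hvx] with x hux hvx
  rw [← rpow_mul (div_pos hvx hux).le, mul_inv_cancel₀ ha, rpow_one]

end RegularVariation

theorem tendsto_apply_div_apply_of_level_div_const {f g : ℝ → ℝ} {a c A B K : ℝ} {u v : ℝ → ℝ}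
    (hf : Tendsto (fun b => b ^ a * f b) (𝓝[>] 0) (𝓝 A)) (hA : A ≠ 0) (ha : a ≠ 0)
    (hf_anti : AntitoneOn f (Ioi 0)) (hg : Tendsto (fun b => b ^ c * g b) (𝓝[>] 0) (𝓝 B))
    (hB : B ≠ 0) (hK : 0 < K) (hu : ∀ᶠ M in atTop, 0 < u M) (hv : ∀ᶠ M in atTop, 0 < v M)
    (hfu : ∀ᶠ M in atTop, f (u M) = M) (hfv : ∀ᶠ M in atTop, f (v M) = M / K) :
    Tendsto (fun M => g (v M) / g (u M)) atTop (𝓝 (K ^ (-(c / a)))) := by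
  have hu0 := tendsto_nhdsGT_zero_of_antitoneOn hf_anti hu
    (tendsto_id.congr' (hfu.mono fun M h => h.symm))
  have hv0 := tendsto_nhdsGT_zero_of_antitoneOn hf_anti hv
    ((tendsto_id.atTop_div_const hK).congr' (hfv.mono fun M h => h.symm))
  have hfvu : Tendsto (fun M => f (v M) / f (u M)) atTop (𝓝 K⁻¹) := by
    refine tendsto_const_nhds.congr' ?_
    filter_upwards [hfu, hfv, eventually_gt_atTop 0] with M hfu hfv hM
    rw [hfu, hfv]
    field_simp
  have h := tendsto_apply_div_apply_of_tendsto_div hg hB hu0 hv0 (by positivity)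
    (tendsto_div_of_tendsto_apply_div_apply hf hA ha hu0 hv0 (inv_pos.2 hK) hfvu)
  rw [inv_rpow hK.le, ← rpow_neg hK.le, ← rpow_mul hK.le, neg_neg] at h
  convert h using 3
  ring

lemma exp_sub_one_pos {x : ℝ} (hx : 0 < x) : 0 < exp x - 1 := by
  linarith [add_one_lt_exp hx.ne']

lemma div_exp_sub_one_le {x : ℝ} (hx : 0 < x) : x / (exp x - 1) ≤ exp (-(x / 2)) := by
  have hsinh : x / 2 ≤ sinh (x / 2) := self_le_sinh_iff.2 (by positivity)
  have hsplit : exp (-(x / 2)) * (exp x - 1) = 2 * sinh (x / 2) := by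
    rw [sinh_eq, mul_sub, ← exp_add]; ring_nf
  rw [div_le_iff₀ (exp_sub_one_pos hx)]
  linarith

lemma sqrt_div_exp_sub_one_le {x : ℝ} (hx : 0 < x) :
    √x / (exp x - 1) ≤ exp (-(x / 2)) / √x := by
  have hsx : 0 < √x := sqrt_pos.2 hx
  calc √x / (exp x - 1) = x / (exp x - 1) / √x := by
        rw [eq_div_iff hsx.ne', div_mul_eq_mul_div, mul_self_sqrt hx.le]
    _ ≤ exp (-(x / 2)) / √x := by gcongr; exact div_exp_sub_one_le hx

lemma le_mul_natCeil_div {t b : ℝ} (hb : 0 < b) : t ≤ b * ⌈t / b⌉₊ :=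
  (div_le_iff₀' hb).1 (Nat.le_ceil _)

lemma mul_natCeil_div_lt {t b : ℝ} (ht : 0 ≤ t) (hb : 0 < b) : b * ⌈t / b⌉₊ < t + b := by
  calc b * ⌈t / b⌉₊ < b * (t / b + 1) := by gcongr; exact Nat.ceil_lt_add_one (by positivity)
    _ = t + b := by field_simp

lemma tendsto_mul_natCeil_div {t : ℝ} (ht : 0 ≤ t) :
    Tendsto (fun b : ℝ => b * ⌈t / b⌉₊) (𝓝[>] 0) (𝓝 t) := by
  have hub : Tendsto (fun b : ℝ => t + b) (𝓝[>] 0) (𝓝 t) := by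
    simpa using ((continuous_const_add t).tendsto 0).mono_left nhdsWithin_le_nhds
  refine tendsto_of_tendsto_of_tendsto_of_le_of_le' tendsto_const_nhds hub ?_ ?_ <;>
    filter_upwards [self_mem_nhdsWithin] with b (hb : 0 < b)
  · exact le_mul_natCeil_div hb
  · exact (mul_natCeil_div_lt ht hb).le

lemma lintegral_Ioi_natCeil (w : ℕ → ℝ≥0∞) :
    ∫⁻ s in Ioi (0 : ℝ), w ⌈s⌉₊ = ∑' j : ℕ, w (j + 1) := by
  have hcover : Ioi (0 : ℝ) = ⋃ j : ℕ, Nat.ceil ⁻¹' {j + 1} := by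
    ext s
    simp only [mem_Ioi, mem_iUnion, mem_preimage, mem_singleton_iff]
    rw [← Nat.ceil_pos]
    exact ⟨fun h => ⟨_, (Nat.succ_pred_eq_of_pos h).symm⟩, fun ⟨j, hj⟩ => hj ▸ j.succ_pos⟩
  have hmeas (j : ℕ) : MeasurableSet ((Nat.ceil : ℝ → ℕ) ⁻¹' {j + 1}) :=
    Nat.measurable_ceil (measurableSet_singleton _)
  have hdisj : Pairwise (Function.onFun Disjoint fun j : ℕ => (Nat.ceil : ℝ → ℕ) ⁻¹' {j + 1}) :=
    fun i j hij => (disjoint_singleton.2 (by omega)).preimage _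
  rw [hcover, lintegral_iUnion hmeas hdisj]
  refine tsum_congr fun j => ?_
  rw [setLIntegral_congr_fun (hmeas j) (g := fun _ => w (j + 1)) fun s hs => by rw [hs],
    setLIntegral_const, Nat.preimage_ceil_of_ne_zero j.succ_ne_zero, Real.volume_Ioc]
  simp

lemma integral_Ioi_natCeil_div {w : ℕ → ℝ} (hw : ∀ n, 0 ≤ w n)
    (hsum : Summable fun j => w (j + 1)) {b : ℝ} (hb : 0 < b) :
    ∫ t in Ioi (0 : ℝ), w ⌈t / b⌉₊ = b * ∑' j : ℕ, w (j + 1) := by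
  have hunit : ∫ s in Ioi (0 : ℝ), w ⌈s⌉₊ = ∑' j : ℕ, w (j + 1) := by
    rw [integral_eq_lintegral_of_nonneg_ae (Eventually.of_forall fun s => hw _)
        (measurable_from_nat.comp Nat.measurable_ceil).aestronglyMeasurable,
      lintegral_Ioi_natCeil fun n => ENNReal.ofReal (w n),
      ← ENNReal.ofReal_tsum_of_nonneg (fun j => hw _) hsum,
      ENNReal.toReal_ofReal (tsum_nonneg fun j => hw _)]
  have hscale := integral_comp_mul_left_Ioi (fun s => w ⌈s⌉₊) 0 (inv_pos.2 hb)
  simp only [mul_zero, inv_inv, smul_eq_mul] at hscale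
  simp_rw [div_eq_inv_mul]
  rw [hscale, hunit]

namespace CriticalNumber

noncomputable def q (n : ℕ) : ℝ := ⌊√(n : ℝ)⌋₊

lemma q_nonneg (n : ℕ) : 0 ≤ q n := Nat.cast_nonneg _

lemma q_le_sqrt (n : ℕ) : q n ≤ √n := Nat.floor_le (sqrt_nonneg _)

lemma sqrt_mul_q_le {b : ℝ} (hb : 0 ≤ b) (n : ℕ) : √b * q n ≤ √(b * n) := by
  rw [sqrt_mul hb]
  exact mul_le_mul_of_nonneg_left (q_le_sqrt n) (sqrt_nonneg b)

lemma sqrt_mul_sub_sqrt_le {b : ℝ} (hb : 0 ≤ b) (n : ℕ) : √(b * n) - √b ≤ √b * q n := by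
  rw [sqrt_mul hb]
  nlinarith [sqrt_nonneg b, Nat.lt_floor_add_one (√(n : ℝ)), show q n = ⌊√(n : ℝ)⌋₊ from rfl]

noncomputable def boseTerm (p b : ℝ) (n : ℕ) : ℝ := (n : ℝ) ^ p * q n / (exp (b * n) - 1)

noncomputable def boseSum (p b : ℝ) : ℝ := ∑' j : ℕ, boseTerm p b (j + 1)

noncomputable def boseIntegral (p : ℝ) : ℝ := ∫ t in Ioi (0 : ℝ), t ^ p * √t / (exp t - 1)

lemma boseTerm_nonneg (p : ℝ) {b : ℝ} (hb : 0 < b) (n : ℕ) : 0 ≤ boseTerm p b n := by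
  rcases n.eq_zero_or_pos with rfl | hn
  · simp [boseTerm, q]
  · exact div_nonneg (mul_nonneg (by positivity) (q_nonneg n)) (exp_sub_one_pos (by positivity)).le

lemma boseTerm_le {p b : ℝ} (hp : p ≤ 1) (hb : 0 < b) (n : ℕ) :
    boseTerm p b n ≤ b⁻¹ * (n * exp (-(b / 2)) ^ n) := by
  rcases n.eq_zero_or_pos with rfl | hn
  · simp [boseTerm, q]
  have hn1 : (1 : ℝ) ≤ n := by exact_mod_cast hn
  have hx : 0 < b * n := by positivity
  have hnum : (n : ℝ) ^ p * q n ≤ n * n := by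
    refine mul_le_mul ((rpow_le_rpow_of_exponent_le hn1 hp).trans_eq (rpow_one _)) ?_
      (q_nonneg n) (Nat.cast_nonneg n)
    exact (q_le_sqrt n).trans ((sqrt_le_left (Nat.cast_nonneg n)).2 (by nlinarith))
  calc boseTerm p b n ≤ n * n / (exp (b * n) - 1) :=
        div_le_div_of_nonneg_right hnum (exp_sub_one_pos hx).le
    _ = b⁻¹ * (n * (b * n / (exp (b * n) - 1))) := by field_simp
    _ ≤ b⁻¹ * (n * exp (-(b * n / 2))) := by gcongr; exact div_exp_sub_one_le hx
    _ = b⁻¹ * (n * exp (-(b / 2)) ^ n) := by rw [← exp_nat_mul]; ring_nf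

lemma summable_boseTerm {p b : ℝ} (hp : p ≤ 1) (hb : 0 < b) :
    Summable fun j : ℕ => boseTerm p b (j + 1) := by
  have hr : ‖exp (-(b / 2))‖ < 1 := by
    rw [norm_of_nonneg (exp_pos _).le, exp_lt_one_iff]; linarith
  have hgeom : Summable fun j : ℕ => b⁻¹ * (((j + 1 : ℕ) : ℝ) * exp (-(b / 2)) ^ (j + 1)) := by
    have h := summable_pow_mul_geometric_of_norm_lt_one 1 hr
    simp only [pow_one] at h
    exact ((summable_nat_add_iff 1).2 h).mul_left b⁻¹
  exact hgeom.of_nonneg_of_le (fun j => boseTerm_nonneg p hb _) fun j => boseTerm_le hp hb _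

lemma boseSum_antitoneOn {p : ℝ} (hp : p ≤ 1) : AntitoneOn (boseSum p) (Ioi 0) := by
  intro a (ha : 0 < a) b (hb : 0 < b) hab
  refine (summable_boseTerm hp hb).tsum_le_tsum (fun j => ?_) (summable_boseTerm hp ha)
  have hn : (0 : ℝ) < ((j + 1 : ℕ) : ℝ) := by positivity
  exact div_le_div_of_nonneg_left (mul_nonneg (by positivity) (q_nonneg _))
    (exp_sub_one_pos (mul_pos ha hn)) (by gcongr)

noncomputable def scaledTerm (p b : ℝ) (n : ℕ) : ℝ := (b * n) ^ p * (√b * q n) / (exp (b * n) - 1)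

lemma scaledTerm_eq {p b : ℝ} (hb : 0 < b) (n : ℕ) :
    scaledTerm p b n = b ^ (p + 1 / 2) * boseTerm p b n := by
  rw [scaledTerm, boseTerm, mul_rpow hb.le (Nat.cast_nonneg n), rpow_add hb, sqrt_eq_rpow]
  ring

lemma scaledTerm_nonneg (p : ℝ) {b : ℝ} (hb : 0 < b) (n : ℕ) : 0 ≤ scaledTerm p b n := by
  rw [scaledTerm_eq hb]
  exact mul_nonneg (by positivity) (boseTerm_nonneg p hb n)

lemma integral_scaledTerm_natCeil {p b : ℝ} (hp : p ≤ 1) (hb : 0 < b) :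
    ∫ t in Ioi (0 : ℝ), scaledTerm p b ⌈t / b⌉₊ = b ^ (p + 3 / 2) * boseSum p b := by
  have heq : (fun j : ℕ => scaledTerm p b (j + 1)) =
      fun j => b ^ (p + 1 / 2) * boseTerm p b (j + 1) := funext fun j => scaledTerm_eq hb _
  rw [integral_Ioi_natCeil_div (scaledTerm_nonneg p hb)
    (heq ▸ (summable_boseTerm hp hb).mul_left _) hb, heq, tsum_mul_left, boseSum, ← mul_assoc,
    show p + 3 / 2 = 1 + (p + 1 / 2) by ring, rpow_add hb 1, rpow_one]

lemma tendsto_scaledTerm_natCeil (p : ℝ) {t : ℝ} (ht : 0 < t) :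
    Tendsto (fun b => scaledTerm p b ⌈t / b⌉₊) (𝓝[>] 0) (𝓝 (t ^ p * √t / (exp t - 1))) := by
  have hx := tendsto_mul_natCeil_div ht.le
  have hq : Tendsto (fun b : ℝ => √b * q ⌈t / b⌉₊) (𝓝[>] 0) (𝓝 √t) := by
    have hup := (continuous_sqrt.tendsto t).comp hx
    have hsqrt : Tendsto (fun b : ℝ => √b) (𝓝[>] 0) (𝓝 0) := by
      simpa using (continuous_sqrt.tendsto 0).mono_left nhdsWithin_le_nhds
    have hlow : Tendsto (fun b : ℝ => √(b * ⌈t / b⌉₊) - √b) (𝓝[>] 0) (𝓝 √t) := by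
      simpa using hup.sub hsqrt
    refine tendsto_of_tendsto_of_tendsto_of_le_of_le' hlow hup ?_ ?_ <;>
      filter_upwards [self_mem_nhdsWithin] with b (hb : 0 < b)
    · exact sqrt_mul_sub_sqrt_le hb.le _
    · exact sqrt_mul_q_le hb.le _
  exact ((hx.rpow_const (.inl ht.ne')).mul hq).div
    (((continuous_exp.tendsto t).comp hx).sub_const 1) (exp_sub_one_pos ht).ne'

lemma rpow_mul_sqrt_div_exp_sub_one_le {p t x : ℝ} (hp0 : 0 ≤ p) (hp1 : p ≤ 1) (ht : 0 < t)
    (htx : t ≤ x) (hxt : x ≤ t + 1) :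
    x ^ p * √x / (exp x - 1) ≤ (t + 1) * (exp (-(t / 2)) / √t) := by
  have hx : 0 < x := ht.trans_le htx
  have hxp : x ^ p ≤ t + 1 :=
    calc x ^ p ≤ (t + 1) ^ p := rpow_le_rpow hx.le hxt hp0
      _ ≤ (t + 1) ^ (1 : ℝ) := rpow_le_rpow_of_exponent_le (by linarith) hp1
      _ = t + 1 := rpow_one _
  calc x ^ p * √x / (exp x - 1) = x ^ p * (√x / (exp x - 1)) := mul_div_assoc _ _ _
    _ ≤ (t + 1) * (exp (-(x / 2)) / √x) :=
      mul_le_mul hxp (sqrt_div_exp_sub_one_le hx)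
        (div_nonneg (sqrt_nonneg x) (exp_sub_one_pos hx).le) (by linarith)
    _ ≤ (t + 1) * (exp (-(t / 2)) / √t) := by gcongr

lemma scaledTerm_natCeil_le {p b t : ℝ} (hp0 : 0 ≤ p) (hp1 : p ≤ 1) (hb : 0 < b) (hb1 : b ≤ 1)
    (ht : 0 < t) : scaledTerm p b ⌈t / b⌉₊ ≤ (t + 1) * (exp (-(t / 2)) / √t) := by
  have htx := le_mul_natCeil_div (t := t) hb
  have hx : 0 < b * ⌈t / b⌉₊ := ht.trans_le htx
  refine le_trans ?_ (rpow_mul_sqrt_div_exp_sub_one_le hp0 hp1 ht htx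
    (by linarith [mul_natCeil_div_lt ht.le hb]))
  exact div_le_div_of_nonneg_right (mul_le_mul_of_nonneg_left (sqrt_mul_q_le hb.le _)
    (rpow_nonneg hx.le _)) (exp_sub_one_pos hx).le

lemma integrableOn_dominant :
    IntegrableOn (fun t : ℝ => (t + 1) * (exp (-(t / 2)) / √t)) (Ioi 0) := by
  have h := (integrableOn_rpow_mul_exp_neg_mul_rpow (s := 1 / 2) (by norm_num) one_pos
    (b := 1 / 2) (by norm_num)).add (integrableOn_rpow_mul_exp_neg_mul_rpow (s := -(1 / 2))
    (by norm_num) one_pos (b := 1 / 2) (by norm_num))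
  refine h.congr_fun (fun t (ht : 0 < t) => ?_) measurableSet_Ioi
  show t ^ (1 / 2 : ℝ) * exp (-(1 / 2) * t ^ (1 : ℝ)) +
      t ^ (-(1 / 2) : ℝ) * exp (-(1 / 2) * t ^ (1 : ℝ)) = (t + 1) * (exp (-(t / 2)) / √t)
  rw [rpow_neg ht.le, ← sqrt_eq_rpow, rpow_one]
  field_simp
  rw [sq_sqrt ht.le]

lemma integrableOn_boseIntegrand {p : ℝ} (hp0 : 0 ≤ p) (hp1 : p ≤ 1) :
    IntegrableOn (fun t : ℝ => t ^ p * √t / (exp t - 1)) (Ioi 0) := by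
  refine integrableOn_dominant.mono' (Measurable.aestronglyMeasurable (by fun_prop))
    ((ae_restrict_iff' measurableSet_Ioi).2
    (Eventually.of_forall fun t (ht : 0 < t) => ?_))
  rw [norm_of_nonneg (div_nonneg (by positivity) (exp_sub_one_pos ht).le)]
  exact rpow_mul_sqrt_div_exp_sub_one_le hp0 hp1 ht le_rfl (by linarith)

lemma boseIntegral_pos {p : ℝ} (hp0 : 0 ≤ p) (hp1 : p ≤ 1) : 0 < boseIntegral p := by
  have hpos (t : ℝ) (ht : 0 < t) : 0 < t ^ p * √t / (exp t - 1) := by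
    have := exp_sub_one_pos ht
    positivity
  rw [boseIntegral, setIntegral_pos_iff_support_of_nonneg_ae
    ((ae_restrict_iff' measurableSet_Ioi).2 (Eventually.of_forall fun t ht => (hpos t ht).le))
    (integrableOn_boseIntegrand hp0 hp1)]
  refine lt_of_lt_of_le ?_ (measure_mono (s := Ioi (0 : ℝ)) fun t ht => ⟨(hpos t ht).ne', ht⟩)
  rw [Real.volume_Ioi]
  exact ENNReal.zero_lt_top

theorem tendsto_rpow_mul_boseSum {p : ℝ} (hp0 : 0 ≤ p) (hp1 : p ≤ 1) :
    Tendsto (fun b => b ^ (p + 3 / 2) * boseSum p b) (𝓝[>] 0) (𝓝 (boseIntegral p)) := by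
  have hsmall : ∀ᶠ b in 𝓝[>] (0 : ℝ), b ∈ Ioc 0 1 := Ioc_mem_nhdsGT one_pos
  refine (tendsto_integral_filter_of_dominated_convergence (F := fun b t => scaledTerm p b ⌈t / b⌉₊)
    _ ?_ ?_ integrableOn_dominant ?_).congr' ?_
  · filter_upwards with b
    exact Measurable.aestronglyMeasurable
      ((measurable_from_nat (f := scaledTerm p b)).comp (measurable_id.div_const b).nat_ceil)
  · filter_upwards [hsmall] with b ⟨hb, hb1⟩
    refine (ae_restrict_iff' measurableSet_Ioi).2 (Eventually.of_forall fun t (ht : 0 < t) => ?_)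
    rw [norm_of_nonneg (scaledTerm_nonneg p hb _)]
    exact scaledTerm_natCeil_le hp0 hp1 hb hb1 ht
  · exact (ae_restrict_iff' measurableSet_Ioi).2
      (Eventually.of_forall fun t ht => tendsto_scaledTerm_natCeil p ht)
  · filter_upwards [hsmall] with b hb
    exact integral_scaledTerm_natCeil hp1 hb.1

lemma mul_boseSum_one_eq_tsum (c b : ℝ) : c * boseSum 1 b = ∑' j : ℕ,
    ((j + 1 : ℕ) : ℝ) * (c * (⌊√((j + 1 : ℕ) : ℝ)⌋₊ : ℝ)) / (exp (b * ((j + 1 : ℕ) : ℝ)) - 1) := by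
  rw [boseSum, ← tsum_mul_left]
  refine tsum_congr fun j => ?_
  simp only [boseTerm, q, rpow_one]
  ring

lemma mul_boseSum_zero_eq_tsum (c b : ℝ) : c * boseSum 0 b = ∑' j : ℕ,
    c * (⌊√((j + 1 : ℕ) : ℝ)⌋₊ : ℝ) / (exp (b * ((j + 1 : ℕ) : ℝ)) - 1) := by
  rw [boseSum, ← tsum_mul_left]
  refine tsum_congr fun j => ?_
  simp only [boseTerm, q, rpow_zero, one_mul, mul_div_assoc]

end CriticalNumber

open CriticalNumber in
/-- If all multiplicities q_j = ⌊√j⌋ are multiplied by K ≥ 1, the critical number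
scales as Ñ_cr ∼ K^{2/5} N_cr as M → ∞. -/
theorem Ncr_scaling_with_colors (K : ℝ) (hK : 1 ≤ K) (β βt : ℝ → ℝ)
    (hβpos : ∀ M : ℝ, 0 < M → 0 < β M)
    (hβtpos : ∀ M : ℝ, 0 < M → 0 < βt M)
    (hβ : ∀ M : ℝ, 0 < M →
      (∑' j : ℕ, ((j + 1 : ℕ) : ℝ) * (⌊Real.sqrt ((j + 1 : ℕ) : ℝ)⌋₊ : ℝ) /
          (Real.exp (β M * ((j + 1 : ℕ) : ℝ)) - 1)) = M)
    (hβt : ∀ M : ℝ, 0 < M →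
      (∑' j : ℕ, ((j + 1 : ℕ) : ℝ) * (K * (⌊Real.sqrt ((j + 1 : ℕ) : ℝ)⌋₊ : ℝ)) /
          (Real.exp (βt M * ((j + 1 : ℕ) : ℝ)) - 1)) = M) :
    Filter.Tendsto
      (fun M : ℝ =>
        (∑' j : ℕ, (K * (⌊Real.sqrt ((j + 1 : ℕ) : ℝ)⌋₊ : ℝ)) /
            (Real.exp (βt M * ((j + 1 : ℕ) : ℝ)) - 1)) /
          (K ^ ((2:ℝ)/5) *
            ∑' j : ℕ, (⌊Real.sqrt ((j + 1 : ℕ) : ℝ)⌋₊ : ℝ) /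
              (Real.exp (β M * ((j + 1 : ℕ) : ℝ)) - 1)))
      Filter.atTop (nhds 1) := by
  have hK0 : 0 < K := by linarith
  have hpos : ∀ᶠ M : ℝ in atTop, 0 < M := eventually_gt_atTop 0
  have hS1 : ∀ᶠ M in atTop, boseSum 1 (β M) = M := hpos.mono fun M hM =>
    Eq.trans (by simpa only [one_mul] using mul_boseSum_one_eq_tsum 1 (β M)) (hβ M hM)
  have hS1t : ∀ᶠ M in atTop, boseSum 1 (βt M) = M / K := hpos.mono fun M hM =>
    eq_div_of_mul_eq hK0.ne' ((mul_comm _ _).trans ((mul_boseSum_one_eq_tsum K _).trans (hβt M hM)))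
  have hratio := (tendsto_apply_div_apply_of_level_div_const
    (tendsto_rpow_mul_boseSum zero_le_one le_rfl) (boseIntegral_pos zero_le_one le_rfl).ne'
    (by norm_num) (boseSum_antitoneOn le_rfl) (tendsto_rpow_mul_boseSum le_rfl zero_le_one)
    (boseIntegral_pos le_rfl zero_le_one).ne' hK0 (hpos.mono hβpos) (hpos.mono hβtpos) hS1
    hS1t).const_mul (K ^ (3 / 5 : ℝ))
  rw [← rpow_add hK0] at hratio
  norm_num at hratio
  refine hratio.congr fun M => ?_
  have hden := mul_boseSum_zero_eq_tsum 1 (β M)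
  simp only [one_mul] at hden
  have hK35 : K / K ^ (2 / 5 : ℝ) = K ^ (3 / 5 : ℝ) := by
    rw [div_eq_iff (by positivity), ← rpow_add hK0]
    norm_num
  rw [← mul_boseSum_zero_eq_tsum, ← hden, mul_div_mul_comm, hK35]
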